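/- arXiv:1012.4401 — 3 statements merged into one kernel-verified Lean document; each statement's English description precedes it below -/
import Mathlib

section
/- For probability distributions P1, P2 on a finite alphabet X and any α with 0 < α < 1, the Rényi divergence satisfies D_α(P1‖P2) = min over all probability distributions Q with support contained in the support of P1 of [ (α/(1−α))·D(Q‖P1) + D(Q‖P2) ]. -/
open scoped Classical BigOperators

noncomputable def shannonEntropy {X : Type*} [Fintype X] (Q : X → ℝ) : ℝ :=
  -∑ x, Q x * Real.log (Q x)

noncomputable def klDiv {X : Type*} [Fintype X] (Q P : X → ℝ) : EReal :=
  if ∀ x, 0 < Q x → 0 < P x then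
    ((∑ x, Q x * Real.log (Q x / P x) : ℝ) : EReal)
  else ⊤

noncomputable def renyiEntropy {X : Type*} [Fintype X] (α : ℝ) (P : X → ℝ) : ℝ :=
  (1 / (1 - α)) * Real.log (∑ x, P x ^ α)

noncomputable def renyiDiv {X : Type*} [Fintype X] (α : ℝ) (P1 P2 : X → ℝ) : EReal :=
  if 1 < α ∧ ¬ (∀ x, 0 < P1 x → 0 < P2 x) then ⊤
  else if ∀ x, ¬ (0 < P1 x ∧ 0 < P2 x) then ⊤
  else ((1 / (α - 1)) *
      Real.log (∑ x, if 0 < P1 x ∧ 0 < P2 x then P1 x ^ α * P2 x ^ (1 - α) else 0) : ℝ)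

def IsPMF {X : Type*} [Fintype X] (P : X → ℝ) : Prop :=
  (∀ x, 0 ≤ P x) ∧ ∑ x, P x = 1

/-!
Write `R = P1 ^ α * P2 ^ (1 - α)` and `Z = ∑ R`. For `Q` supported on both supports,
`(α / (1 - α)) D(Q‖P1) + D(Q‖P2) = (1 / (1 - α)) ∑ Q log (Q / R)`, and Gibbs' inequality gives
`∑ Q log (Q / R) ≥ -log Z`, with equality at `Q = R / Z`. As `1 / (α - 1) * log Z` is
`D_α(P1‖P2)`, this is the minimum. If `Q` charges a point outside the support of `P2`, the
objective is `⊤`; if the supports of `P1` and `P2` are disjoint, `D_α(P1‖P2) = ⊤` too, attained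
at `Q = P1`.
-/

open Real

lemma rpow_mul_rpow_one_sub_pos_iff {a b α : ℝ} (ha : 0 ≤ a) (hb : 0 ≤ b) (hα0 : 0 < α)
    (hα1 : α < 1) : 0 < a ^ α * b ^ (1 - α) ↔ 0 < a ∧ 0 < b := by
  refine ⟨fun h => ?_, fun ⟨ha', hb'⟩ => by positivity⟩
  by_contra hab
  rcases not_and_or.1 hab with ha' | hb'
  · rw [← ha.antisymm (not_lt.1 ha'), zero_rpow hα0.ne', zero_mul] at h
    exact h.false
  · rw [← hb.antisymm (not_lt.1 hb'), zero_rpow (sub_pos.2 hα1).ne', mul_zero] at h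
    exact h.false

section

variable {X : Type*} [Fintype X] {α : ℝ} {P P1 P2 Q R : X → ℝ}

lemma klDiv_of_forall_pos (h : ∀ x, 0 < Q x → 0 < P x) :
    klDiv Q P = ((∑ x, Q x * log (Q x / P x) : ℝ) : EReal) :=
  if_pos h

lemma klDiv_of_not_forall_pos (h : ¬ ∀ x, 0 < Q x → 0 < P x) : klDiv Q P = ⊤ :=
  if_neg h

lemma IsPMF.exists_pos (hQ : IsPMF Q) : ∃ x, 0 < Q x := by
  simpa using Finset.exists_lt_of_sum_lt (s := Finset.univ) (f := 0) (g := Q)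
    (by simp [hQ.2])

lemma isPMF_div_sum (hR : ∀ x, 0 ≤ R x) (hZ : 0 < ∑ x, R x) :
    IsPMF fun x => R x / ∑ y, R y :=
  ⟨fun x => div_nonneg (hR x) hZ.le, by rw [← Finset.sum_div, div_self hZ.ne']⟩

lemma renyiDiv_of_forall_not_pos (hα : α ≤ 1) (h : ∀ x, ¬ (0 < P1 x ∧ 0 < P2 x)) :
    renyiDiv α P1 P2 = ⊤ := by
  rw [renyiDiv, if_neg fun h' => (hα.not_gt h'.1).elim, if_pos h]

/-- For `0 < α < 1` the restriction to the common support in `renyiDiv` is automatic,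
since `0 ^ α = 0 ^ (1 - α) = 0`. -/
lemma renyiDiv_of_exists_pos (hα0 : 0 < α) (hα1 : α < 1) (hP1 : ∀ x, 0 ≤ P1 x)
    (hP2 : ∀ x, 0 ≤ P2 x) (h : ∃ x, 0 < P1 x ∧ 0 < P2 x) :
    renyiDiv α P1 P2 =
      ((1 / (α - 1) * log (∑ x, P1 x ^ α * P2 x ^ (1 - α)) : ℝ) : EReal) := by
  have hterm : ∀ x, (if 0 < P1 x ∧ 0 < P2 x then P1 x ^ α * P2 x ^ (1 - α) else 0) =
      P1 x ^ α * P2 x ^ (1 - α) := fun x => by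
    split_ifs with hx
    · rfl
    · exact (mul_nonneg (rpow_nonneg (hP1 x) _) (rpow_nonneg (hP2 x) _)).eq_or_lt.resolve_right
        fun hpos => hx ((rpow_mul_rpow_one_sub_pos_iff (hP1 x) (hP2 x) hα0 hα1).1 hpos)
  rw [renyiDiv, if_neg fun h' => (hα1.not_gt h'.1).elim, if_neg (by simpa using h),
    Finset.sum_congr rfl fun x _ => hterm x]

lemma sub_le_mul_log_div {q r : ℝ} (hq : 0 ≤ q) (hr : 0 ≤ r) (hqr : 0 < q → 0 < r) :
    q - r ≤ q * log (q / r) := by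
  rcases hq.eq_or_lt with rfl | hq
  · simpa using hr
  · have hr := hqr hq
    have := one_sub_inv_le_log_of_pos (div_pos hq hr)
    rw [inv_div] at this
    calc q - r = q * (1 - r / q) := by field_simp
      _ ≤ q * log (q / r) := mul_le_mul_of_nonneg_left this hq.le

lemma neg_log_sum_le_sum_mul_log_div (hQ : IsPMF Q) (hR : ∀ x, 0 ≤ R x)
    (hQR : ∀ x, 0 < Q x → 0 < R x) :
    -log (∑ x, R x) ≤ ∑ x, Q x * log (Q x / R x) := by
  set Z : ℝ := ∑ x, R x
  obtain ⟨x₀, hx₀⟩ := hQ.exists_pos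
  have hZ : 0 < Z := Finset.sum_pos' (fun x _ => hR x) ⟨x₀, Finset.mem_univ _, hQR x₀ hx₀⟩
  have hpt : ∀ x, Q x - R x / Z ≤ Q x * log (Q x / R x) + Q x * log Z := by
    intro x
    rcases (hQ.1 x).eq_or_lt with hq | hq
    · rw [← hq]; simpa using div_nonneg (hR x) hZ.le
    · have hRx := hQR x hq
      calc Q x - R x / Z ≤ Q x * log (Q x / (R x / Z)) :=
            sub_le_mul_log_div hq.le (div_nonneg (hR x) hZ.le) fun _ => div_pos hRx hZ
        _ = Q x * log (Q x / R x) + Q x * log Z := by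
            rw [div_div_eq_mul_div, mul_div_right_comm, log_mul (div_pos hq hRx).ne' hZ.ne',
              mul_add]
  have hsum := Finset.sum_le_sum fun x (_ : x ∈ Finset.univ) => hpt x
  rw [Finset.sum_sub_distrib, Finset.sum_add_distrib, ← Finset.sum_div, div_self hZ.ne', hQ.2,
    ← Finset.sum_mul, hQ.2, one_mul] at hsum
  linarith

lemma sum_div_sum_mul_log_div (hR : ∀ x, 0 ≤ R x) :
    ∑ x, R x / (∑ y, R y) * log (R x / (∑ y, R y) / R x) = -log (∑ x, R x) := by
  set Z : ℝ := ∑ y, R y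
  calc ∑ x, R x / Z * log (R x / Z / R x) = ∑ x, R x / Z * -log Z := by
        refine Finset.sum_congr rfl fun x _ => ?_
        rcases (hR x).eq_or_lt with hx | hx
        · simp [← hx]
        · rw [div_div_cancel_left' hx.ne', log_inv]
    _ = -log Z := by
        rw [← Finset.sum_mul, ← Finset.sum_div]
        have hZ : 0 ≤ Z := Finset.sum_nonneg fun x _ => hR x
        rcases hZ.eq_or_lt with hZ | hZ
        · rw [← hZ, div_zero, zero_mul, log_zero, neg_zero]
        · rw [div_self hZ.ne', one_mul]

lemma mul_sum_mul_log_div_add_sum_mul_log_div (hα : α ≠ 1) (hQ : ∀ x, 0 ≤ Q x)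
    (hQ1 : ∀ x, 0 < Q x → 0 < P1 x) (hQ2 : ∀ x, 0 < Q x → 0 < P2 x) :
    α / (1 - α) * ∑ x, Q x * log (Q x / P1 x) + ∑ x, Q x * log (Q x / P2 x) =
      1 / (1 - α) * ∑ x, Q x * log (Q x / (P1 x ^ α * P2 x ^ (1 - α))) := by
  rw [Finset.mul_sum, Finset.mul_sum, ← Finset.sum_add_distrib]
  refine Finset.sum_congr rfl fun x _ => ?_
  rcases (hQ x).eq_or_lt with hq | hq
  · simp [← hq]
  · have hp1 := hQ1 x hq
    have hp2 := hQ2 x hq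
    have h1α : 1 - α ≠ 0 := sub_ne_zero.2 hα.symm
    rw [log_div hq.ne' hp1.ne', log_div hq.ne' hp2.ne', log_div hq.ne' (by positivity),
      log_mul (by positivity) (by positivity), log_rpow hp1, log_rpow hp2]
    field_simp
    ring

lemma renyiDiv_le_of_lt_one (hP1 : ∀ x, 0 ≤ P1 x) (hP2 : ∀ x, 0 ≤ P2 x)
    (hα0 : 0 < α) (hα1 : α < 1) (hQ : IsPMF Q) (hQ1 : ∀ x, 0 < Q x → 0 < P1 x) :
    renyiDiv α P1 P2 ≤ ((α / (1 - α) : ℝ) : EReal) * klDiv Q P1 + klDiv Q P2 := by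
  by_cases hQ2 : ∀ x, 0 < Q x → 0 < P2 x
  · obtain ⟨x₀, hx₀⟩ := hQ.exists_pos
    rw [renyiDiv_of_exists_pos hα0 hα1 hP1 hP2 ⟨x₀, hQ1 x₀ hx₀, hQ2 x₀ hx₀⟩,
      klDiv_of_forall_pos hQ1, klDiv_of_forall_pos hQ2, ← EReal.coe_mul, ← EReal.coe_add,
      EReal.coe_le_coe_iff, mul_sum_mul_log_div_add_sum_mul_log_div hα1.ne hQ.1 hQ1 hQ2]
    have gibbs := neg_log_sum_le_sum_mul_log_div (R := fun x => P1 x ^ α * P2 x ^ (1 - α)) hQ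
      (fun x => mul_nonneg (rpow_nonneg (hP1 x) _) (rpow_nonneg (hP2 x) _)) fun x hx =>
        (rpow_mul_rpow_one_sub_pos_iff (hP1 x) (hP2 x) hα0 hα1).2 ⟨hQ1 x hx, hQ2 x hx⟩
    calc 1 / (α - 1) * log (∑ x, P1 x ^ α * P2 x ^ (1 - α))
        = 1 / (1 - α) * -log (∑ x, P1 x ^ α * P2 x ^ (1 - α)) := by
          rw [← neg_sub, div_neg, neg_mul, mul_neg]
      _ ≤ _ := mul_le_mul_of_nonneg_left gibbs (by linarith [one_div_pos.2 (sub_pos.2 hα1)])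
  · rw [klDiv_of_forall_pos hQ1, klDiv_of_not_forall_pos hQ2, ← EReal.coe_mul,
      EReal.coe_add_top]
    exact le_top

lemma exists_renyiDiv_eq_of_lt_one (hP1 : IsPMF P1) (hP2 : ∀ x, 0 ≤ P2 x) (hα0 : 0 < α)
    (hα1 : α < 1) : ∃ Q : X → ℝ, IsPMF Q ∧ (∀ x, 0 < Q x → 0 < P1 x) ∧
      renyiDiv α P1 P2 = ((α / (1 - α) : ℝ) : EReal) * klDiv Q P1 + klDiv Q P2 := by
  by_cases hS : ∃ x, 0 < P1 x ∧ 0 < P2 x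
  · set R : X → ℝ := fun x => P1 x ^ α * P2 x ^ (1 - α)
    have hR : ∀ x, 0 ≤ R x := fun x =>
      mul_nonneg (rpow_nonneg (hP1.1 x) _) (rpow_nonneg (hP2 x) _)
    have hRpos : ∀ x, 0 < R x ↔ 0 < P1 x ∧ 0 < P2 x := fun x =>
      rpow_mul_rpow_one_sub_pos_iff (hP1.1 x) (hP2 x) hα0 hα1
    obtain ⟨x₀, hx₀⟩ := hS
    have hZ : 0 < ∑ x, R x :=
      Finset.sum_pos' (fun x _ => hR x) ⟨x₀, Finset.mem_univ _, (hRpos x₀).2 hx₀⟩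
    have hsupp : ∀ x, 0 < R x / ∑ y, R y → 0 < P1 x ∧ 0 < P2 x := fun x h =>
      (hRpos x).1 ((hR x).lt_of_ne fun h0 => by rw [← h0, zero_div] at h; exact h.false)
    refine ⟨fun x => R x / ∑ y, R y, isPMF_div_sum hR hZ, fun x hx => (hsupp x hx).1, ?_⟩
    rw [renyiDiv_of_exists_pos hα0 hα1 hP1.1 hP2 ⟨x₀, hx₀⟩,
      klDiv_of_forall_pos fun x hx => (hsupp x hx).1,
      klDiv_of_forall_pos fun x hx => (hsupp x hx).2, ← EReal.coe_mul, ← EReal.coe_add,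
      EReal.coe_eq_coe_iff,
      mul_sum_mul_log_div_add_sum_mul_log_div hα1.ne (isPMF_div_sum hR hZ).1
        (fun x hx => (hsupp x hx).1) fun x hx => (hsupp x hx).2,
      sum_div_sum_mul_log_div hR, ← neg_sub, div_neg, neg_mul, mul_neg]
  · obtain ⟨x₀, hx₀⟩ := hP1.exists_pos
    refine ⟨P1, hP1, fun _ h => h, ?_⟩
    rw [renyiDiv_of_forall_not_pos hα1.le (by simpa using hS), klDiv_of_forall_pos fun _ h => h,
      klDiv_of_not_forall_pos fun h => hS ⟨x₀, hx₀, h x₀ hx₀⟩, ← EReal.coe_mul,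
      EReal.coe_add_top]

end

theorem renyi_div_char_lt_one {X : Type*} [Fintype X] (P1 P2 : X → ℝ)
    (hP1 : IsPMF P1) (hP2 : IsPMF P2) (α : ℝ) (hα0 : 0 < α) (hα1 : α < 1) :
    IsLeast {v : EReal | ∃ Q : X → ℝ, IsPMF Q ∧ (∀ x, 0 < Q x → 0 < P1 x) ∧
        v = ((α / (1 - α) : ℝ) : EReal) * klDiv Q P1 + klDiv Q P2}
      (renyiDiv α P1 P2) :=
  ⟨exists_renyiDiv_eq_of_lt_one hP1 hP2.1 hα0 hα1, by
    rintro v ⟨Q, hQ, hQ1, rfl⟩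
    exact renyiDiv_le_of_lt_one hP1.1 hP2.1 hα0 hα1 hQ hQ1⟩
end

section
/- As α → 0⁺, the Rényi divergence D_α(P1‖P2) converges to −log P2(S(P1)), where P2(S(P1)) = ∑_{x : P1(x)>0} P2(x). -/
open scoped Classical BigOperators

/-! For `α < 1` the divergence is the real number `log (∑ P1^α P2^(1-α)) / (α - 1)`, the sum
running over the common support. That sum is continuous in `α` and at `α = 0` equals
`P2(S(P1))`, so the limit is `-log P2(S(P1))` whenever this mass is positive; when it vanishes
the supports are disjoint and the divergence is identically `⊤`. -/

open Filter Topology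

section RenyiDivergence

variable {X : Type*} [Fintype X]

noncomputable def renyiSum (α : ℝ) (P1 P2 : X → ℝ) : ℝ :=
  ∑ x, if 0 < P1 x ∧ 0 < P2 x then P1 x ^ α * P2 x ^ (1 - α) else 0

theorem sum_ite_pos_eq_zero_iff {P1 P2 : X → ℝ} (hP2 : ∀ x, 0 ≤ P2 x) :
    (∑ x, if 0 < P1 x then P2 x else 0) = 0 ↔ ∀ x, ¬ (0 < P1 x ∧ 0 < P2 x) := by
  rw [Finset.sum_eq_zero_iff_of_nonneg fun x _ => by split_ifs <;> simp [hP2 x]]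
  refine forall_congr' fun x => ?_
  by_cases h1 : 0 < P1 x <;> simp [h1, (hP2 x).lt_iff_ne, eq_comm]

theorem continuous_renyiSum (P1 P2 : X → ℝ) : Continuous fun α => renyiSum α P1 P2 := by
  refine continuous_finsetSum _ fun x _ => ?_
  split_ifs with h
  · exact (Real.continuous_const_rpow h.1.ne').mul
      ((Real.continuous_const_rpow h.2.ne').comp (continuous_const.sub continuous_id))
  · exact continuous_const

theorem renyiSum_zero {P1 P2 : X → ℝ} (hP2 : ∀ x, 0 ≤ P2 x) :
    renyiSum 0 P1 P2 = ∑ x, if 0 < P1 x then P2 x else 0 := by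
  refine Finset.sum_congr rfl fun x _ => ?_
  by_cases h1 : 0 < P1 x <;> by_cases h2 : 0 < P2 x <;> simp [h1, h2]
  exact (le_antisymm (not_lt.mp h2) (hP2 x)).symm

theorem renyiDiv_eq_top_of_disjoint {P1 P2 : X → ℝ} (h : ∀ x, ¬ (0 < P1 x ∧ 0 < P2 x))
    (α : ℝ) : renyiDiv α P1 P2 = ⊤ := by
  simp [renyiDiv, h]

theorem renyiDiv_eq_of_lt_one {P1 P2 : X → ℝ} (h : ∃ x, 0 < P1 x ∧ 0 < P2 x) {α : ℝ}
    (hα : α < 1) :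
    renyiDiv α P1 P2 = ((1 / (α - 1) * Real.log (renyiSum α P1 P2) : ℝ) : EReal) := by
  rw [renyiDiv, if_neg fun h' => hα.not_gt h'.1, if_neg (not_forall_not.mpr h)]
  rfl

theorem tendsto_renyiDiv_nhdsGT_zero_of_exists {P1 P2 : X → ℝ} (hP2 : ∀ x, 0 ≤ P2 x)
    (h : ∃ x, 0 < P1 x ∧ 0 < P2 x) :
    Tendsto (fun α => renyiDiv α P1 P2) (𝓝[>] 0)
      (𝓝 ((-Real.log (∑ x, if 0 < P1 x then P2 x else 0) : ℝ) : EReal)) := by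
  have hsum : renyiSum 0 P1 P2 ≠ 0 := by
    rw [renyiSum_zero hP2, Ne, sum_ite_pos_eq_zero_iff hP2]
    exact not_forall_not.mpr h
  have hcont : ContinuousAt (fun α : ℝ => 1 / (α - 1) * Real.log (renyiSum α P1 P2)) 0 :=
    (continuousAt_const.div (continuousAt_id.sub continuousAt_const) (by norm_num)).mul
      ((Real.continuousAt_log hsum).comp (f := fun α => renyiSum α P1 P2)
        (continuous_renyiSum P1 P2).continuousAt)
  have hval : 1 / (0 - 1) * Real.log (renyiSum 0 P1 P2)
      = -Real.log (∑ x, if 0 < P1 x then P2 x else 0) := by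
    rw [renyiSum_zero hP2]; ring
  rw [← hval]
  refine ((continuous_coe_real_ereal.tendsto _).comp
    (hcont.tendsto.mono_left nhdsWithin_le_nhds)).congr' ?_
  filter_upwards [Ioo_mem_nhdsGT (zero_lt_one' ℝ)] with α hα
  exact (renyiDiv_eq_of_lt_one h hα.2).symm

end RenyiDivergence

theorem renyi_div_tendsto_zero_general {X : Type*} [Fintype X] (P1 P2 : X → ℝ)
    (hP2 : IsPMF P2) :
    Filter.Tendsto (fun α => renyiDiv α P1 P2) (nhdsWithin 0 (Set.Ioi 0))
      (nhds (if (∑ x, if 0 < P1 x then P2 x else 0) = 0 then (⊤ : EReal)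
             else ((-Real.log (∑ x, if 0 < P1 x then P2 x else 0) : ℝ) : EReal))) := by
  split_ifs with hS
  · simp only [renyiDiv_eq_top_of_disjoint ((sum_ite_pos_eq_zero_iff hP2.1).mp hS)]
    exact tendsto_const_nhds
  · refine tendsto_renyiDiv_nhdsGT_zero_of_exists hP2.1 ?_
    simpa [sum_ite_pos_eq_zero_iff hP2.1] using hS

theorem renyi_div_tendsto_zero {X : Type*} [Fintype X] (P1 P2 : X → ℝ)
    (hP1 : IsPMF P1) (hP2 : IsPMF P2) :
    Filter.Tendsto (fun α => renyiDiv α P1 P2) (nhdsWithin 0 (Set.Ioi 0))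
      (nhds (if (∑ x, if 0 < P1 x then P2 x else 0) = 0 then (⊤ : EReal)
             else ((-Real.log (∑ x, if 0 < P1 x then P2 x else 0) : ℝ) : EReal))) :=
  renyi_div_tendsto_zero_general P1 P2 hP2
end

section
/- For α > 1 (resp. 0 < α < 1) and P1 ≪ P2 (resp. S(P1) ∩ S(P2) ≠ ∅), the unique maximizer (resp. minimizer) of Q ↦ (α/(1−α))·D(Q‖P1) + D(Q‖P2) over distributions Q with support contained in S(P1) is Q*(x) = P1(x)^α P2(x)^{1−α} / ∑_{x'} P1(x')^α P2(x')^{1−α}, and the optimal value equals D_α(P1‖P2). -/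
open scoped Classical BigOperators

/-- The objective `G_α(P1,P2;Q) = (α/(1-α))·D(Q‖P1) + D(Q‖P2)`. -/
noncomputable def Gdiv {X : Type*} [Fintype X] (α : ℝ) (P1 P2 Q : X → ℝ) : EReal :=
  ((α / (1 - α) : ℝ) : EReal) * klDiv Q P1 + klDiv Q P2

lemma gibbs_pt {q r : ℝ} (hq : 0 ≤ q) (hr : 0 ≤ r) (habs : 0 < q → 0 < r) :
    q - r ≤ q * Real.log (q / r) ∧ (q - r = q * Real.log (q / r) → q = r) := by
  rcases eq_or_lt_of_le hq with h | h
  · simp only [← h, zero_mul, zero_sub, neg_nonpos]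
    exact ⟨hr, fun e => by linarith⟩
  · have hr' := habs h
    have hd : 0 < r / q := div_pos hr' h
    have key : Real.log (r / q) ≤ r / q - 1 := Real.log_le_sub_one_of_pos hd
    have hlog : Real.log (q / r) = - Real.log (r / q) := by
      rw [← Real.log_inv, inv_div]
    constructor
    · rw [hlog]
      have : q * Real.log (r / q) ≤ q * (r / q - 1) := mul_le_mul_of_nonneg_left key hq
      have h2 : q * (r / q - 1) = r - q := by field_simp
      nlinarith
    · intro heq
      by_contra hne
      have hne1 : r / q ≠ 1 := by
        intro h1
        exact hne (by field_simp at h1; linarith)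
      have key2 : Real.log (r / q) < r / q - 1 := Real.log_lt_sub_one_of_pos hd hne1
      have : q * Real.log (r / q) < q * (r / q - 1) := mul_lt_mul_of_pos_left key2 h
      have h2 : q * (r / q - 1) = r - q := by field_simp
      rw [hlog] at heq
      nlinarith

lemma gibbs {X : Type*} [Fintype X] (Q R : X → ℝ) (hQ0 : ∀ x, 0 ≤ Q x) (hR0 : ∀ x, 0 ≤ R x)
    (hQ1 : ∑ x, Q x = 1) (hR1 : ∑ x, R x = 1) (habs : ∀ x, 0 < Q x → 0 < R x) :
    0 ≤ ∑ x, Q x * Real.log (Q x / R x) ∧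
      (∑ x, Q x * Real.log (Q x / R x) = 0 → Q = R) := by
  have hpt : ∀ x ∈ Finset.univ, Q x - R x ≤ Q x * Real.log (Q x / R x) :=
    fun x _ => (gibbs_pt (hQ0 x) (hR0 x) (habs x)).1
  have hsum : ∑ x, (Q x - R x) ≤ ∑ x, Q x * Real.log (Q x / R x) :=
    Finset.sum_le_sum hpt
  have h0 : ∑ x, (Q x - R x) = 0 := by rw [Finset.sum_sub_distrib, hQ1, hR1]; ring
  refine ⟨by linarith, fun heq => ?_⟩
  have := (Finset.sum_eq_sum_iff_of_le hpt).1 (by rw [h0, heq])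
  funext x
  exact (gibbs_pt (hQ0 x) (hR0 x) (habs x)).2 (this x (Finset.mem_univ x))

lemma key_identity {X : Type*} [Fintype X] (P1 P2 Q : X → ℝ) (α : ℝ) (hα1 : (1:ℝ) - α ≠ 0)
    (hQ0 : ∀ x, 0 ≤ Q x) (hQ1 : ∑ x, Q x = 1)
    (hQP1 : ∀ x, 0 < Q x → 0 < P1 x) (hQP2 : ∀ x, 0 < Q x → 0 < P2 x)
    (Z : ℝ) (hZpos : 0 < Z) :
    (α/(1-α)) * ∑ x, Q x * Real.log (Q x / P1 x) + ∑ x, Q x * Real.log (Q x / P2 x)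
    = (1/(1-α)) * ∑ x, Q x * Real.log (Q x / ((P1 x ^ α * P2 x ^ (1-α)) / Z))
      + (1/(α-1)) * Real.log Z := by
  have hc : (1/(α-1)) * Real.log Z = ∑ x, Q x * ((1/(α-1)) * Real.log Z) := by
    rw [← Finset.sum_mul, hQ1, one_mul]
  rw [hc, Finset.mul_sum, Finset.mul_sum, ← Finset.sum_add_distrib, ← Finset.sum_add_distrib]
  refine Finset.sum_congr rfl fun x _ => ?_
  rcases eq_or_lt_of_le (hQ0 x) with h | h
  · simp [← h]
  · have h1 := hQP1 x h
    have h2 := hQP2 x h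
    have ht : 0 < P1 x ^ α * P2 x ^ (1-α) :=
      mul_pos (Real.rpow_pos_of_pos h1 α) (Real.rpow_pos_of_pos h2 (1-α))
    rw [Real.log_div h.ne' h1.ne', Real.log_div h.ne' h2.ne',
      Real.log_div h.ne' (div_pos ht hZpos).ne', Real.log_div ht.ne' hZpos.ne',
      Real.log_mul (Real.rpow_pos_of_pos h1 α).ne' (Real.rpow_pos_of_pos h2 (1-α)).ne',
      Real.log_rpow h1, Real.log_rpow h2]
    have hαm : α - 1 ≠ 0 := by intro hh; apply hα1; linarith
    field_simp
    ring

lemma renyi_eq {X : Type*} [Fintype X] (P1 P2 : X → ℝ) (hP10 : ∀ x, 0 ≤ P1 x)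
    (hP20 : ∀ x, 0 ≤ P2 x) (α : ℝ) (hα0 : 0 < α) (hα1 : α ≠ 1)
    (hcond : ¬(1 < α ∧ ¬ ∀ x, 0 < P1 x → 0 < P2 x)) (hex : ∃ x, 0 < P1 x ∧ 0 < P2 x) :
    renyiDiv α P1 P2
      = (((1/(α-1)) * Real.log (∑ x, P1 x ^ α * P2 x ^ (1-α)) : ℝ) : EReal) := by
  have hs : (∑ x, if 0 < P1 x ∧ 0 < P2 x then P1 x ^ α * P2 x ^ (1 - α) else 0)
      = ∑ x, P1 x ^ α * P2 x ^ (1-α) := by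
    refine Finset.sum_congr rfl fun x _ => ?_
    by_cases hx : 0 < P1 x ∧ 0 < P2 x
    · rw [if_pos hx]
    · rw [if_neg hx]
      rcases not_and_or.mp hx with h | h
      · have : P1 x = 0 := le_antisymm (not_lt.mp h) (hP10 x)
        rw [this, Real.zero_rpow hα0.ne', zero_mul]
      · have : P2 x = 0 := le_antisymm (not_lt.mp h) (hP20 x)
        rw [this, Real.zero_rpow (sub_ne_zero.mpr (Ne.symm hα1)), mul_zero]
  rw [renyiDiv, if_neg hcond, if_neg (by push_neg; exact hex), hs]

lemma Gdiv_eq_coe {X : Type*} [Fintype X] (α : ℝ) (P1 P2 Q : X → ℝ)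
    (h1 : ∀ x, 0 < Q x → 0 < P1 x) (h2 : ∀ x, 0 < Q x → 0 < P2 x) :
    Gdiv α P1 P2 Q = (((α/(1-α)) * ∑ x, Q x * Real.log (Q x / P1 x)
      + ∑ x, Q x * Real.log (Q x / P2 x) : ℝ) : EReal) := by
  rw [Gdiv, klDiv, klDiv, if_pos h1, if_pos h2]
  norm_cast

lemma core {X : Type*} [Fintype X] (P1 P2 : X → ℝ)
    (hP1 : IsPMF P1) (hP2 : IsPMF P2) (α : ℝ) (hα0 : 0 < α) (hα1 : α ≠ 1)
    (Qstar : X → ℝ)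
    (hQstar : Qstar = fun x =>
      (P1 x ^ α * P2 x ^ (1 - α)) / ∑ x', P1 x' ^ α * P2 x' ^ (1 - α))
    (hex : ∃ x, 0 < P1 x ∧ 0 < P2 x) :
    IsPMF Qstar ∧ (∀ x, 0 < Qstar x → 0 < P1 x) ∧ (∀ x, 0 < Qstar x → 0 < P2 x) ∧
    (∀ x, 0 < P1 x → 0 < P2 x → 0 < Qstar x) ∧
    Gdiv α P1 P2 Qstar
      = (((1/(α-1)) * Real.log (∑ x, P1 x ^ α * P2 x ^ (1-α)) : ℝ) : EReal) ∧
    (∀ Q : X → ℝ, IsPMF Q → (∀ x, 0 < Q x → 0 < P1 x) → (∀ x, 0 < Q x → 0 < P2 x) →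
      Gdiv α P1 P2 Q = (((1/(1-α)) * ∑ x, Q x * Real.log (Q x / Qstar x)
        + (1/(α-1)) * Real.log (∑ x, P1 x ^ α * P2 x ^ (1-α)) : ℝ) : EReal)) := by
  set Z := ∑ x, P1 x ^ α * P2 x ^ (1-α) with hZ
  have h1α : (1:ℝ) - α ≠ 0 := sub_ne_zero.mpr (Ne.symm hα1)
  obtain ⟨x0, hx01, hx02⟩ := hex
  have hZpos : 0 < Z := by
    apply Finset.sum_pos' (fun x _ => mul_nonneg (Real.rpow_nonneg (hP1.1 x) _)
      (Real.rpow_nonneg (hP2.1 x) _))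
    exact ⟨x0, Finset.mem_univ x0,
      mul_pos (Real.rpow_pos_of_pos hx01 _) (Real.rpow_pos_of_pos hx02 _)⟩
  have hQ0 : ∀ x, 0 ≤ Qstar x := fun x => by
    rw [hQstar]
    exact div_nonneg (mul_nonneg (Real.rpow_nonneg (hP1.1 x) _)
      (Real.rpow_nonneg (hP2.1 x) _)) hZpos.le
  have hQsum : ∑ x, Qstar x = 1 := by
    simp only [hQstar]
    rw [← Finset.sum_div, div_self hZpos.ne']
  have habs1 : ∀ x, 0 < Qstar x → 0 < P1 x := by
    intro x hx
    by_contra h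
    have h0 : P1 x = 0 := le_antisymm (not_lt.mp h) (hP1.1 x)
    rw [hQstar] at hx
    simp only [h0, Real.zero_rpow hα0.ne', zero_mul, zero_div] at hx
    exact lt_irrefl 0 hx
  have habs2 : ∀ x, 0 < Qstar x → 0 < P2 x := by
    intro x hx
    by_contra h
    have h0 : P2 x = 0 := le_antisymm (not_lt.mp h) (hP2.1 x)
    rw [hQstar] at hx
    simp only [h0, Real.zero_rpow h1α, mul_zero, zero_div] at hx
    exact lt_irrefl 0 hx
  have hpos : ∀ x, 0 < P1 x → 0 < P2 x → 0 < Qstar x := by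
    intro x h1 h2
    rw [hQstar]
    exact div_pos (mul_pos (Real.rpow_pos_of_pos h1 _) (Real.rpow_pos_of_pos h2 _)) hZpos
  have hid : ∀ Q : X → ℝ, IsPMF Q → (∀ x, 0 < Q x → 0 < P1 x) → (∀ x, 0 < Q x → 0 < P2 x) →
      Gdiv α P1 P2 Q = (((1/(1-α)) * ∑ x, Q x * Real.log (Q x / Qstar x)
        + (1/(α-1)) * Real.log Z : ℝ) : EReal) := by
    intro Q hQ hq1 hq2
    rw [Gdiv_eq_coe α P1 P2 Q hq1 hq2, EReal.coe_eq_coe_iff]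
    simp only [hQstar]
    exact key_identity P1 P2 Q α h1α hQ.1 hQ.2 hq1 hq2 Z hZpos
  refine ⟨⟨hQ0, hQsum⟩, habs1, habs2, hpos, ?_, hid⟩
  rw [hid Qstar ⟨hQ0, hQsum⟩ habs1 habs2, EReal.coe_eq_coe_iff]
  have hself : ∑ x, Qstar x * Real.log (Qstar x / Qstar x) = 0 := by
    refine Finset.sum_eq_zero fun x _ => ?_
    rcases eq_or_lt_of_le (hQ0 x) with h | h
    · rw [← h, zero_mul]
    · rw [div_self h.ne', Real.log_one, mul_zero]
  rw [hself, mul_zero, zero_add]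

theorem renyi_div_unique_optimizer {X : Type*} [Fintype X] (P1 P2 : X → ℝ)
    (hP1 : IsPMF P1) (hP2 : IsPMF P2) (α : ℝ) (hα0 : 0 < α) (hα1 : α ≠ 1)
    (Qstar : X → ℝ)
    (hQstar : Qstar = fun x =>
      (P1 x ^ α * P2 x ^ (1 - α)) / ∑ x', P1 x' ^ α * P2 x' ^ (1 - α)) :
    (1 < α → (∀ x, 0 < P1 x → 0 < P2 x) →
      Gdiv α P1 P2 Qstar = renyiDiv α P1 P2 ∧
      (∀ Q : X → ℝ, IsPMF Q → (∀ x, 0 < Q x → 0 < P1 x) → Gdiv α P1 P2 Q ≤ Gdiv α P1 P2 Qstar) ∧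
      (∀ Q : X → ℝ, IsPMF Q → (∀ x, 0 < Q x → 0 < P1 x) →
        Gdiv α P1 P2 Q = Gdiv α P1 P2 Qstar → Q = Qstar)) ∧
    (α < 1 → (∃ x, 0 < P1 x ∧ 0 < P2 x) →
      Gdiv α P1 P2 Qstar = renyiDiv α P1 P2 ∧
      (∀ Q : X → ℝ, IsPMF Q → (∀ x, 0 < Q x → 0 < P1 x) → Gdiv α P1 P2 Qstar ≤ Gdiv α P1 P2 Q) ∧
      (∀ Q : X → ℝ, IsPMF Q → (∀ x, 0 < Q x → 0 < P1 x) →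
        Gdiv α P1 P2 Q = Gdiv α P1 P2 Qstar → Q = Qstar)) := by
  constructor
  · intro hgt habs
    have hex : ∃ x, 0 < P1 x ∧ 0 < P2 x := by
      have h1 : ∃ x, 0 < P1 x := by
        by_contra h
        push_neg at h
        have h0 : ∑ x, P1 x = 0 := Finset.sum_eq_zero fun x _ => le_antisymm (h x) (hP1.1 x)
        rw [hP1.2] at h0; norm_num at h0
      obtain ⟨x, hx⟩ := h1
      exact ⟨x, hx, habs x hx⟩
    obtain ⟨hQpmf, habs1, habs2, hpos, hGstar, hid⟩ :=
      core P1 P2 hP1 hP2 α hα0 hα1 Qstar hQstar hex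
    have hren := renyi_eq P1 P2 hP1.1 hP2.1 α hα0 hα1 (fun h => h.2 habs) hex
    have hc : 1/(1-α) < 0 := div_neg_of_pos_of_neg one_pos (by linarith)
    refine ⟨by rw [hGstar, hren], ?_, ?_⟩
    · intro Q hQ hq1
      have hq2 : ∀ x, 0 < Q x → 0 < P2 x := fun x hx => habs x (hq1 x hx)
      have habsQ : ∀ x, 0 < Q x → 0 < Qstar x := fun x hx => hpos x (hq1 x hx) (hq2 x hx)
      have hD := (gibbs Q Qstar hQ.1 hQpmf.1 hQ.2 hQpmf.2 habsQ).1
      rw [hid Q hQ hq1 hq2, hGstar, EReal.coe_le_coe_iff]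
      nlinarith [mul_nonpos_of_nonpos_of_nonneg hc.le hD]
    · intro Q hQ hq1 heq
      have hq2 : ∀ x, 0 < Q x → 0 < P2 x := fun x hx => habs x (hq1 x hx)
      have habsQ : ∀ x, 0 < Q x → 0 < Qstar x := fun x hx => hpos x (hq1 x hx) (hq2 x hx)
      rw [hid Q hQ hq1 hq2, hGstar, EReal.coe_eq_coe_iff] at heq
      have hD0 : ∑ x, Q x * Real.log (Q x / Qstar x) = 0 := by
        have hm : 1/(1-α) * ∑ x, Q x * Real.log (Q x / Qstar x) = 0 := by linarith
        exact (mul_eq_zero.mp hm).resolve_left hc.ne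
      exact (gibbs Q Qstar hQ.1 hQpmf.1 hQ.2 hQpmf.2 habsQ).2 hD0
  · intro hlt hex
    obtain ⟨hQpmf, habs1, habs2, hpos, hGstar, hid⟩ :=
      core P1 P2 hP1 hP2 α hα0 hα1 Qstar hQstar hex
    have hren := renyi_eq P1 P2 hP1.1 hP2.1 α hα0 hα1
      (fun h => absurd h.1 (not_lt.mpr hlt.le)) hex
    have hc : 0 < 1/(1-α) := div_pos one_pos (by linarith)
    refine ⟨by rw [hGstar, hren], ?_, ?_⟩
    · intro Q hQ hq1
      by_cases hq2 : ∀ x, 0 < Q x → 0 < P2 x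
      · have habsQ : ∀ x, 0 < Q x → 0 < Qstar x := fun x hx => hpos x (hq1 x hx) (hq2 x hx)
        have hD := (gibbs Q Qstar hQ.1 hQpmf.1 hQ.2 hQpmf.2 habsQ).1
        rw [hid Q hQ hq1 hq2, hGstar, EReal.coe_le_coe_iff]
        nlinarith [mul_nonneg hc.le hD]
      · have hTop : Gdiv α P1 P2 Q = ⊤ := by
          rw [Gdiv, klDiv, klDiv, if_pos hq1, if_neg hq2, ← EReal.coe_mul, EReal.coe_add_top]
        rw [hTop]
        exact le_top
    · intro Q hQ hq1 heq
      by_cases hq2 : ∀ x, 0 < Q x → 0 < P2 x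
      · have habsQ : ∀ x, 0 < Q x → 0 < Qstar x := fun x hx => hpos x (hq1 x hx) (hq2 x hx)
        rw [hid Q hQ hq1 hq2, hGstar, EReal.coe_eq_coe_iff] at heq
        have hD0 : ∑ x, Q x * Real.log (Q x / Qstar x) = 0 := by
          have hm : 1/(1-α) * ∑ x, Q x * Real.log (Q x / Qstar x) = 0 := by linarith
          exact (mul_eq_zero.mp hm).resolve_left hc.ne'
        exact (gibbs Q Qstar hQ.1 hQpmf.1 hQ.2 hQpmf.2 habsQ).2 hD0
      · have hTop : Gdiv α P1 P2 Q = ⊤ := by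
          rw [Gdiv, klDiv, klDiv, if_pos hq1, if_neg hq2, ← EReal.coe_mul, EReal.coe_add_top]
        rw [hTop, hGstar] at heq
        exact absurd heq.symm (EReal.coe_ne_top _)
end
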